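/- Let Γ be a distance-regular graph and C a completely regular code with covering radius ρ and Spec*(C) = {θ_{i_1}, …, θ_{i_ρ}}. Let λ_j and τ_j (0 ≤ j ≤ ρ) be the coefficients with u(θ_{i_1}) ∘ u(θ_{i_1}) = Σ_j λ_j u(θ_{i_j}) and u(θ_{i_1}) ∘ u(θ_{i_1}) ∘ u(θ_{i_1}) = Σ_j τ_j u(θ_{i_j}) (where i_0 = 0). If λ_j ≠ 0 then q_{i_1, i_1}^{i_j} ≠ 0, and if τ_j ≠ 0 then there exists an index i_ℓ such that q_{i_1, i_1}^{i_ℓ} ≠ 0 and q_{i_ℓ, i_1}^{i_j} ≠ 0. -/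

import Mathlib

open Finset Matrix

variable {V : Type*}

/-- `G` is a distance-regular graph with valency `k`, diameter `D`,
and intersection numbers `b i`, `c i`. -/
def IsDRG [Fintype V] (G : SimpleGraph V) [DecidableRel G.Adj]
    (k D : ℕ) (b c : ℕ → ℕ) : Prop :=
  G.Connected ∧ (∀ v, G.degree v = k) ∧
    (∀ x y : V, G.dist x y ≤ D) ∧ (∃ x y : V, G.dist x y = D) ∧
    ∀ i ≤ D, ∀ x y : V, G.dist x y = i →
      ((Finset.univ.filter fun z => G.Adj y z ∧ G.dist x z = i - 1).card = c i ∧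
       (Finset.univ.filter fun z => G.Adj y z ∧ G.dist x z = i + 1).card = b i)

/-- the distance from a vertex `v` to the code `C` -/
noncomputable def codeDist (G : SimpleGraph V) (C : Finset V) (v : V) : ℕ :=
  sInf {n | ∃ y ∈ C, G.dist v y = n}

/-- the characteristic vector of a code -/
def charVec [DecidableEq V] (C : Finset V) : V → ℂ :=
  fun v => if v ∈ C then 1 else 0

/-- the characteristic vector of the `i`-th cell `C_i` of the distance partition -/
noncomputable def cellVec (G : SimpleGraph V) (C : Finset V) (i : ℕ) : V → ℂ :=
  fun v => if codeDist G C v = i then 1 else 0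

/-- the `i`-th cell `C_i` of the distance partition, as a finset -/
noncomputable def cellFinset [Fintype V] (G : SimpleGraph V) (C : Finset V) (i : ℕ) : Finset V :=
  Finset.univ.filter fun v => codeDist G C v = i

/-- the number of neighbours of `v` lying in the `j`-th cell `C_j` -/
noncomputable def nbrsInCell [Fintype V] (G : SimpleGraph V) [DecidableRel G.Adj]
    (C : Finset V) (j : ℕ) (v : V) : ℕ :=
  (Finset.univ.filter fun z => G.Adj v z ∧ codeDist G C z = j).card

/-- `C` is a completely regular code with covering radius `ρ` and
intersection numbers `γ i, α i, β i`. -/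
def IsCRC [Fintype V] (G : SimpleGraph V) [DecidableRel G.Adj]
    (C : Finset V) (ρ : ℕ) (γ α β : ℕ → ℕ) : Prop :=
  C.Nonempty ∧ (∀ v, codeDist G C v ≤ ρ) ∧ (∃ v, codeDist G C v = ρ) ∧
    (∀ i, 1 ≤ i → i ≤ ρ → ∀ v, codeDist G C v = i → nbrsInCell G C (i - 1) v = γ i) ∧
    (∀ i ≤ ρ, ∀ v, codeDist G C v = i → nbrsInCell G C i v = α i) ∧
    (∀ i ≤ ρ, ∀ v, codeDist G C v = i → nbrsInCell G C (i + 1) v = β i)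

/-- the outer distribution module `𝔸x` of the code `C`, where `𝔸` is the
Bose-Mesner algebra (the algebra generated by the adjacency matrix) -/
noncomputable def outerModule [Fintype V] [DecidableEq V] (G : SimpleGraph V)
    [DecidableRel G.Adj] (C : Finset V) : Submodule ℂ (V → ℂ) :=
  Submodule.span ℂ {w | ∃ M ∈ Algebra.adjoin ℂ {G.adjMatrix ℂ}, w = M *ᵥ charVec C}

/-- the tridiagonal quotient matrix `U` of a completely regular code -/
def quotientMatrix (F : Type*) [Semiring F] (γ α β : ℕ → ℕ) (ρ : ℕ) :
    Matrix (Fin (ρ + 1)) (Fin (ρ + 1)) F :=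
  Matrix.of fun i j =>
    if (i : ℕ) = (j : ℕ) + 1 then (γ (i : ℕ) : F)
    else if (i : ℕ) = (j : ℕ) then (α (i : ℕ) : F)
    else if (j : ℕ) = (i : ℕ) + 1 then (β (i : ℕ) : F)
    else 0

/-- `θ` lists the distinct eigenvalues of `A` and `E j` is the orthogonal
projection onto the eigenspace of `θ j` (the primitive idempotents). -/
def PrimIdem [Fintype V] [DecidableEq V] (A : Matrix V V ℂ) (D : ℕ)
    (θ : Fin (D + 1) → ℝ) (E : Fin (D + 1) → Matrix V V ℂ) : Prop :=
  Function.Injective θ ∧ (∀ j, E j * E j = E j) ∧ (∀ j, (E j)ᴴ = E j) ∧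
    (∀ j, A * E j = (θ j : ℂ) • E j) ∧ (∑ j, E j = 1) ∧ (∀ j, E j ≠ 0)

/-- `q` are the Krein parameters of the primitive idempotents `E`. -/
def KreinRel [Fintype V] (D : ℕ) (E : Fin (D + 1) → Matrix V V ℂ)
    (q : Fin (D + 1) → Fin (D + 1) → Fin (D + 1) → ℝ) : Prop :=
  ∀ i j, Matrix.hadamard (E i) (E j) = (Fintype.card V : ℂ)⁻¹ • ∑ l, (q i j l : ℂ) • E l

/-- the Krein parameters satisfy the `Q`-polynomial condition with respect to the
given ordering of the primitive idempotents -/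
def QPolyKrein (D : ℕ) (q : Fin (D + 1) → Fin (D + 1) → Fin (D + 1) → ℝ) : Prop :=
  ∀ i j l : Fin (D + 1),
    (¬(((i : ℤ) - (j : ℤ)).natAbs ≤ (l : ℕ) ∧ (l : ℕ) ≤ (i : ℕ) + (j : ℕ)) → q i j l = 0) ∧
    (((l : ℕ) = ((i : ℤ) - (j : ℤ)).natAbs ∨ (l : ℕ) = (i : ℕ) + (j : ℕ)) → q i j l ≠ 0)

/-- a matrix is irreducible tridiagonal if all entries at distance more than one from
the diagonal vanish and all sub- and super-diagonal entries are nonzero -/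
def IrredTridiag {n : ℕ} {F : Type*} [Zero F] (M : Matrix (Fin n) (Fin n) F) : Prop :=
  (∀ i j : Fin n, 1 < (((i : ℕ) : ℤ) - ((j : ℕ) : ℤ)).natAbs → M i j = 0) ∧
  (∀ i j : Fin n, (((i : ℕ) : ℤ) - ((j : ℕ) : ℤ)).natAbs = 1 → M i j ≠ 0)

/-- `C` is a Leonard completely regular code with respect to the (nontrivial)
eigenvalue `θ t`: for some ordering `σ` of the basis `ℬ = {E_j x ≠ 0}` of the outer
distribution module, the matrix representing `y ↦ (E t x) ∘ y` is irreducible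
tridiagonal. -/
def IsLeonardWrt [Fintype V] [DecidableEq V] (D ρ : ℕ)
    (E : Fin (D + 1) → Matrix V V ℂ) (C : Finset V) (t : Fin (D + 1)) : Prop :=
  E t *ᵥ charVec C ≠ 0 ∧
    ∃ σ : Fin (ρ + 1) → Fin (D + 1), Function.Injective σ ∧
      (∀ j : Fin (D + 1), E j *ᵥ charVec C ≠ 0 ↔ j ∈ Set.range σ) ∧
      ∃ M : Matrix (Fin (ρ + 1)) (Fin (ρ + 1)) ℂ, IrredTridiag M ∧
        ∀ j, (E t *ᵥ charVec C) * (E (σ j) *ᵥ charVec C) =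
          ∑ l, M l j • (E (σ l) *ᵥ charVec C)

/-- `C` is a Leonard completely regular code: it is Leonard with respect to some
nontrivial eigenvalue. -/
def IsLeonard [Fintype V] [DecidableEq V] (D ρ : ℕ)
    (E : Fin (D + 1) → Matrix V V ℂ) (C : Finset V) : Prop :=
  ∃ t : Fin (D + 1), t ≠ 0 ∧ IsLeonardWrt D ρ E C t

/-- `C` is a `Q`-polynomial completely regular code with respect to the eigenvalue
`θ t`: there is an ordering `Spec C = {θ 0, θ (σ 1), …, θ (σ ρ)}` with `σ 1 = t`
such that the entrywise `p`-th power of `u = E t x` lies in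
`V_{σ 0} + ⋯ + V_{σ p}` for all `0 ≤ p ≤ ρ`. -/
def IsQPolyCodeWrt [Fintype V] [DecidableEq V] (G : SimpleGraph V) [DecidableRel G.Adj]
    (D ρ : ℕ) (θ : Fin (D + 1) → ℝ) (E : Fin (D + 1) → Matrix V V ℂ)
    (γ α β : ℕ → ℕ) (C : Finset V) (t : Fin (D + 1)) : Prop :=
  ∃ σ : Fin (ρ + 1) → Fin (D + 1), σ 0 = 0 ∧ Function.Injective σ ∧ σ 1 = t ∧
    spectrum ℂ (quotientMatrix ℂ γ α β ρ) = Set.range (fun j => (θ (σ j) : ℂ)) ∧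
    ∀ p : Fin (ρ + 1), (fun v => (E t *ᵥ charVec C) v ^ (p : ℕ)) ∈
      ⨆ (j : Fin (ρ + 1)) (_ : j ≤ p),
        Module.End.eigenspace (Matrix.mulVecLin (G.adjMatrix ℂ)) ((θ (σ j) : ℂ))

/-- `C` is a `Q`-polynomial completely regular code. -/
def IsQPolyCode [Fintype V] [DecidableEq V] (G : SimpleGraph V) [DecidableRel G.Adj]
    (D ρ : ℕ) (θ : Fin (D + 1) → ℝ) (E : Fin (D + 1) → Matrix V V ℂ)
    (γ α β : ℕ → ℕ) (C : Finset V) : Prop :=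
  ∃ t : Fin (D + 1), IsQPolyCodeWrt G D ρ θ E γ α β C t

/-- a translation graph on an abelian group: adjacency is invariant under translation -/
def IsTranslationGraph {X : Type*} [AddCommGroup X] (G : SimpleGraph X) : Prop :=
  ∀ x y z : X, G.Adj x y → G.Adj (x + z) (y + z)

/-- the coset graph of an additive code `C`: cosets `C'` and `C''` are adjacent if
`Γ` has an edge with one end in `C'` and the other in `C''` -/
def cosetGraph {X : Type*} [AddCommGroup X] (G : SimpleGraph X) (C : AddSubgroup X) :
    SimpleGraph (X ⧸ C) where
  Adj a b := a ≠ b ∧ ∃ x y : X,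
    QuotientAddGroup.mk x = a ∧ QuotientAddGroup.mk y = b ∧ G.Adj x y
  symm := ⟨fun a b ⟨hne, x, y, hx, hy, h⟩ => ⟨hne.symm, y, x, hy, hx, h.symm⟩⟩
  loopless := ⟨fun a ⟨hne, _⟩ => hne rfl⟩

/-- `G` is a `Q`-polynomial distance-regular graph: it is distance-regular and
admits an ordering of its primitive idempotents whose Krein parameters satisfy
the `Q`-polynomial condition -/
def IsQPolyDRG {W : Type*} [Fintype W] [DecidableEq W]
    (G : SimpleGraph W) [DecidableRel G.Adj] : Prop :=
  ∃ (k D : ℕ) (b c : ℕ → ℕ), IsDRG G k D b c ∧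
    ∃ (θ : Fin (D + 1) → ℝ) (E : Fin (D + 1) → Matrix W W ℂ)
      (q : Fin (D + 1) → Fin (D + 1) → Fin (D + 1) → ℝ),
      θ 0 = k ∧ PrimIdem (G.adjMatrix ℂ) D θ E ∧ KreinRel D E q ∧ QPolyKrein D q

/-!
Lifting the standard eigenvectors `u j` of the quotient matrix along the distance partition
gives eigenvectors `w j` of the adjacency matrix for `θ (idx j)`, and the identities for
`u 1 * u 1` and `u 1 * u 1 * u 1` lift verbatim to the `w j`. A vanishing Krein parameter
`q a b c` means that `E c` kills every entrywise product of a vector of `V_a` with a vector of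
`V_b`, because `E c * (E a ⊙ E b) * E c = |V|⁻¹ q a b c • E c` is a Gram matrix. Applying
`E (idx j)` to `w 1 * w 1 = ∑ m, λ m • w m` thus forces `λ j = 0` when
`q (idx 1) (idx 1) (idx j) = 0`. For the triple product, split
`w 1 * w 1 = ∑ s, E s (w 1 * w 1)`: the pieces with `s` outside the spectrum of the code
vanish, and `E (idx j)` kills each remaining piece `E (idx l) (w 1 * w 1) * w 1` unless both
Krein parameters of the statement are nonzero.
-/

namespace Matrix

variable {m n R : Type*} [Fintype n] [CommSemiring R]

def faceSplit (M N : Matrix m n R) : Matrix m (n × n) R :=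
  of fun v p => M v p.1 * N v p.2

theorem faceSplit_mulVec (M N : Matrix m n R) (f g : n → R) :
    faceSplit M N *ᵥ (fun p => f p.1 * g p.2) = (M *ᵥ f) * (N *ᵥ g) := by
  ext v
  simp only [faceSplit, mulVec, dotProduct, of_apply, Pi.mul_apply, Fintype.sum_prod_type,
    Finset.sum_mul_sum]
  refine Finset.sum_congr rfl fun a _ => Finset.sum_congr rfl fun b _ => ?_
  ring

theorem faceSplit_mul_conjTranspose [StarRing R] (M N : Matrix m n R) :
    faceSplit M N * (faceSplit M N)ᴴ = (M * Mᴴ) ⊙ (N * Nᴴ) := by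
  ext v w
  simp only [faceSplit, mul_apply, conjTranspose_apply, of_apply, hadamard_apply,
    Fintype.sum_prod_type, Finset.sum_mul_sum, star_mul']
  refine Finset.sum_congr rfl fun a _ => Finset.sum_congr rfl fun b _ => ?_
  ring

end Matrix

namespace PrimIdem

variable {V : Type*} [Fintype V] [DecidableEq V] {A : Matrix V V ℂ} {D : ℕ}
  {θ : Fin (D + 1) → ℝ} {E : Fin (D + 1) → Matrix V V ℂ}

theorem mul_eq_smul (h : PrimIdem A D θ E) (hA : A.IsHermitian) (r : Fin (D + 1)) :
    E r * A = (θ r : ℂ) • E r := by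
  simpa [Matrix.conjTranspose_mul, h.2.2.1 r, hA.eq] using
    congrArg Matrix.conjTranspose (h.2.2.2.1 r)

theorem ofReal_sub_ne_zero (h : PrimIdem A D θ E) {r s : Fin (D + 1)} (hrs : r ≠ s) :
    (θ r : ℂ) - θ s ≠ 0 :=
  sub_ne_zero.mpr fun hθ => hrs (h.1 (by exact_mod_cast hθ))

theorem mul_eq_zero_of_ne (h : PrimIdem A D θ E) (hA : A.IsHermitian) {r s : Fin (D + 1)}
    (hrs : r ≠ s) : E r * E s = 0 := by
  have : ((θ r : ℂ) - θ s) • (E r * E s) = 0 := by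
    rw [sub_smul, ← Matrix.smul_mul, ← h.mul_eq_smul hA, ← Matrix.mul_smul, ← h.2.2.2.1,
      Matrix.mul_assoc, sub_self]
  exact (smul_eq_zero.mp this).resolve_left (h.ofReal_sub_ne_zero hrs)

theorem mulVec_eq_zero_of_mulVec_eq_smul (h : PrimIdem A D θ E) (hA : A.IsHermitian)
    {w : V → ℂ} {s : Fin (D + 1)} (hw : A *ᵥ w = (θ s : ℂ) • w) {r : Fin (D + 1)}
    (hrs : r ≠ s) : E r *ᵥ w = 0 := by
  have : ((θ r : ℂ) - θ s) • (E r *ᵥ w) = 0 := by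
    rw [sub_smul, ← Matrix.smul_mulVec, ← h.mul_eq_smul hA, ← Matrix.mulVec_smul, ← hw,
      Matrix.mulVec_mulVec, sub_self]
  exact (smul_eq_zero.mp this).resolve_left (h.ofReal_sub_ne_zero hrs)

theorem mulVec_eq_self_of_mulVec_eq_smul (h : PrimIdem A D θ E) (hA : A.IsHermitian)
    {w : V → ℂ} {s : Fin (D + 1)} (hw : A *ᵥ w = (θ s : ℂ) • w) : E s *ᵥ w = w := by
  calc E s *ᵥ w = ∑ r, E r *ᵥ w := by
        rw [Finset.sum_eq_single s fun r _ hrs => h.mulVec_eq_zero_of_mulVec_eq_smul hA hw hrs]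
        simp
    _ = w := by rw [← Matrix.sum_mulVec, h.2.2.2.2.1, Matrix.one_mulVec]

variable {q : Fin (D + 1) → Fin (D + 1) → Fin (D + 1) → ℝ}

theorem mul_hadamard_mul (h : PrimIdem A D θ E) (hA : A.IsHermitian) (hq : KreinRel D E q)
    (i j l : Fin (D + 1)) :
    E l * (E i ⊙ E j) * E l = ((Fintype.card V : ℂ)⁻¹ * q i j l) • E l := by
  rw [hq i j, Matrix.mul_smul, Matrix.smul_mul, Finset.mul_sum, Finset.sum_mul,
    Finset.sum_eq_single l]
  · rw [Matrix.mul_smul, Matrix.smul_mul, h.2.1, h.2.1, smul_smul]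
  · intro m _ hml
    rw [Matrix.mul_smul, Matrix.smul_mul, h.mul_eq_zero_of_ne hA hml.symm, Matrix.zero_mul,
      smul_zero]
  · simp

open scoped ComplexOrder in
theorem mulVec_mul_mulVec_eq_zero (h : PrimIdem A D θ E) (hA : A.IsHermitian)
    (hq : KreinRel D E q) {i j l : Fin (D + 1)} (hql : q i j l = 0) (f g : V → ℂ) :
    E l *ᵥ ((E i *ᵥ f) * (E j *ᵥ g)) = 0 := by
  -- `T := E l * faceSplit (E i) (E j)` has `T * Tᴴ = E l * (E i ⊙ E j) * E l = 0`
  have hT : E l * Matrix.faceSplit (E i) (E j) = 0 := by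
    rw [← Matrix.self_mul_conjTranspose_eq_zero, Matrix.conjTranspose_mul, h.2.2.1 l,
      Matrix.mul_assoc, ← Matrix.mul_assoc (Matrix.faceSplit _ _),
      Matrix.faceSplit_mul_conjTranspose, h.2.2.1 i, h.2.2.1 j, h.2.1 i, h.2.1 j,
      ← Matrix.mul_assoc, h.mul_hadamard_mul hA hq, hql]
    simp
  rw [← Matrix.faceSplit_mulVec, Matrix.mulVec_mulVec, hT, Matrix.zero_mulVec]

section Eigenvectors

variable {ι : Type*} [Fintype ι] {idx : ι → Fin (D + 1)} {w : ι → V → ℂ}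

theorem mulVec_sum_smul (h : PrimIdem A D θ E) (hA : A.IsHermitian)
    (hidx : Function.Injective idx) (hw : ∀ m, A *ᵥ w m = (θ (idx m) : ℂ) • w m)
    (a : ι → ℂ) (j : ι) : E (idx j) *ᵥ ∑ m, a m • w m = a j • w j := by
  rw [Matrix.mulVec_sum, Finset.sum_eq_single j, Matrix.mulVec_smul,
    h.mulVec_eq_self_of_mulVec_eq_smul hA (hw j)]
  · intro m _ hmj
    rw [Matrix.mulVec_smul,
      h.mulVec_eq_zero_of_mulVec_eq_smul hA (hw m) (hidx.ne hmj.symm), smul_zero]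
  · simp

theorem mulVec_sum_smul_eq_zero (h : PrimIdem A D θ E) (hA : A.IsHermitian)
    (hw : ∀ m, A *ᵥ w m = (θ (idx m) : ℂ) • w m) (a : ι → ℂ) {s : Fin (D + 1)}
    (hs : s ∉ Set.range idx) : E s *ᵥ ∑ m, a m • w m = 0 := by
  rw [Matrix.mulVec_sum]
  refine Finset.sum_eq_zero fun m _ => ?_
  rw [Matrix.mulVec_smul,
    h.mulVec_eq_zero_of_mulVec_eq_smul hA (hw m) fun hsm => hs ⟨m, hsm.symm⟩, smul_zero]

theorem krein_ne_zero_of_mul_eq_sum (h : PrimIdem A D θ E) (hA : A.IsHermitian)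
    (hq : KreinRel D E q) (hidx : Function.Injective idx)
    (hw : ∀ m, A *ᵥ w m = (θ (idx m) : ℂ) • w m) (hw0 : ∀ m, w m ≠ 0) {t : ι}
    {lam : ι → ℂ} (hlam : w t * w t = ∑ m, lam m • w m) {j : ι} (hj : lam j ≠ 0) :
    q (idx t) (idx t) (idx j) ≠ 0 := by
  intro hq0
  have hzero := h.mulVec_mul_mulVec_eq_zero hA hq hq0 (w t) (w t)
  rw [h.mulVec_eq_self_of_mulVec_eq_smul hA (hw t), hlam, h.mulVec_sum_smul hA hidx hw]
    at hzero
  exact hj ((smul_eq_zero.mp hzero).resolve_right (hw0 j))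

theorem exists_krein_ne_zero_of_mul_mul_eq_sum (h : PrimIdem A D θ E) (hA : A.IsHermitian)
    (hq : KreinRel D E q) (hidx : Function.Injective idx)
    (hw : ∀ m, A *ᵥ w m = (θ (idx m) : ℂ) • w m) (hw0 : ∀ m, w m ≠ 0) {t : ι}
    {lam tau : ι → ℂ} (hlam : w t * w t = ∑ m, lam m • w m)
    (htau : w t * w t * w t = ∑ m, tau m • w m) {j : ι} (hj : tau j ≠ 0) :
    ∃ l, q (idx t) (idx t) (idx l) ≠ 0 ∧ q (idx l) (idx t) (idx j) ≠ 0 := by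
  by_contra! hno
  have hwt := h.mulVec_eq_self_of_mulVec_eq_smul hA (hw t)
  have hsplit : w t * w t * w t = ∑ s, (E s *ᵥ (w t * w t)) * (E (idx t) *ᵥ w t) := by
    rw [hwt, ← Finset.sum_mul, ← Matrix.sum_mulVec, h.2.2.2.2.1, Matrix.one_mulVec]
  have hzero : E (idx j) *ᵥ (w t * w t * w t) = 0 := by
    rw [hsplit, Matrix.mulVec_sum]
    refine Finset.sum_eq_zero fun s _ => ?_
    by_cases hs : s ∈ Set.range idx
    · obtain ⟨l, rfl⟩ := hs
      by_cases hql : q (idx t) (idx t) (idx l) = 0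
      · rw [← hwt, h.mulVec_mul_mulVec_eq_zero hA hq hql, zero_mul, Matrix.mulVec_zero]
      · exact h.mulVec_mul_mulVec_eq_zero hA hq (hno l hql) _ _
    · rw [hlam, h.mulVec_sum_smul_eq_zero hA hw lam hs, zero_mul, Matrix.mulVec_zero]
  rw [htau, h.mulVec_sum_smul hA hidx hw] at hzero
  exact hj ((smul_eq_zero.mp hzero).resolve_right (hw0 j))

end Eigenvectors

end PrimIdem
theorem SimpleGraph.adjMatrix_mulVec_comp_of_equitable {V ι R : Type*} [Fintype V]
    [Fintype ι] [DecidableEq ι] [NonAssocSemiring R] (G : SimpleGraph V) [DecidableRel G.Adj]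
    (π : V → ι) (U : Matrix ι ι R)
    (hU : ∀ v j, ((Finset.univ.filter fun z => G.Adj v z ∧ π z = j).card : R) = U (π v) j)
    (w : ι → R) : G.adjMatrix R *ᵥ (w ∘ π) = (U *ᵥ w) ∘ π := by
  ext v
  rw [SimpleGraph.adjMatrix_mulVec_apply, ← Finset.sum_fiberwise _ π, Function.comp_apply,
    Matrix.mulVec, dotProduct]
  refine Finset.sum_congr rfl fun j _ => ?_
  rw [← hU, ← nsmul_eq_mul, ← Finset.sum_const]
  apply Finset.sum_congr (by ext; simp)
  intro z hz
  simp [(Finset.mem_filter.mp hz).2]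

section codeDist

variable {V : Type*} (G : SimpleGraph V) {C : Finset V}

theorem codeDist_le_dist {y : V} (hy : y ∈ C) (v : V) : codeDist G C v ≤ G.dist v y :=
  Nat.sInf_le ⟨y, hy, rfl⟩

theorem exists_mem_dist_eq_codeDist (hC : C.Nonempty) (v : V) :
    ∃ y ∈ C, G.dist v y = codeDist G C v :=
  let ⟨y, hy⟩ := hC
  Nat.sInf_mem (s := {n | ∃ y ∈ C, G.dist v y = n}) ⟨G.dist v y, y, hy, rfl⟩

theorem codeDist_eq_zero_of_mem {v : V} (hv : v ∈ C) : codeDist G C v = 0 :=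
  Nat.eq_zero_of_le_zero (by simpa using codeDist_le_dist G hv v)

theorem codeDist_le_codeDist_add_one_of_adj (hC : C.Nonempty) (hG : G.Connected) {v z : V}
    (hvz : G.Adj v z) : codeDist G C z ≤ codeDist G C v + 1 := by
  obtain ⟨y, hy, hvy⟩ := exists_mem_dist_eq_codeDist G hC v
  calc codeDist G C z ≤ G.dist z y := codeDist_le_dist G hy z
    _ ≤ G.dist z v + G.dist v y := hG.dist_triangle
    _ = codeDist G C v + 1 := by
      rw [SimpleGraph.dist_eq_one_iff_adj.mpr hvz.symm, hvy, add_comm]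

end codeDist

theorem quotientMatrix_mulVec_comp {F F' : Type*} [Semiring F] [Semiring F'] (f : F →+* F')
    (γ α β : ℕ → ℕ) (ρ : ℕ) (w : Fin (ρ + 1) → F) :
    quotientMatrix F' γ α β ρ *ᵥ (f ∘ w) = f ∘ (quotientMatrix F γ α β ρ *ᵥ w) := by
  ext i
  rw [Function.comp_apply, RingHom.map_mulVec]
  congr 2
  ext a b
  simp only [quotientMatrix, Matrix.map_apply, Matrix.of_apply]
  split_ifs <;> simp

namespace IsCRC

variable {V : Type*} [Fintype V] {G : SimpleGraph V} [DecidableRel G.Adj] {C : Finset V}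
  {ρ : ℕ} {γ α β : ℕ → ℕ}

noncomputable def cell (hC : IsCRC G C ρ γ α β) (v : V) : Fin (ρ + 1) :=
  ⟨codeDist G C v, Nat.lt_succ_of_le (hC.2.1 v)⟩

theorem cell_eq_zero_of_mem (hC : IsCRC G C ρ γ α β) {v : V} (hv : v ∈ C) : hC.cell v = 0 :=
  Fin.ext (codeDist_eq_zero_of_mem G hv)

theorem nbrsInCell_eq (hC : IsCRC G C ρ γ α β) (hG : G.Connected) (R : Type*) [Semiring R]
    (v : V) (j : Fin (ρ + 1)) :
    (nbrsInCell G C j v : R) = quotientMatrix R γ α β ρ (hC.cell v) j := by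
  obtain ⟨hCne, hcov, -, hγ, hα, hβ⟩ := hC
  have hj := j.isLt
  simp only [quotientMatrix, Matrix.of_apply, cell]
  split_ifs with h1 h2 h3
  · rw [show (j : ℕ) = codeDist G C v - 1 by omega, hγ _ (by omega) (hcov v) v rfl]
  · rw [← h2, hα _ (hcov v) v rfl]
  · rw [h3, hβ _ (hcov v) v rfl]
  · rw [nbrsInCell, Finset.card_eq_zero.mpr, Nat.cast_zero]
    refine Finset.filter_eq_empty_iff.mpr ?_
    rintro z - ⟨hvz, hz⟩
    have := codeDist_le_codeDist_add_one_of_adj G hCne hG hvz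
    have := codeDist_le_codeDist_add_one_of_adj G hCne hG hvz.symm
    omega

theorem adjMatrix_mulVec_comp_cell (hC : IsCRC G C ρ γ α β) (hG : G.Connected) {R : Type*}
    [Semiring R] (w : Fin (ρ + 1) → R) :
    G.adjMatrix R *ᵥ (w ∘ hC.cell) = (quotientMatrix R γ α β ρ *ᵥ w) ∘ hC.cell := by
  refine G.adjMatrix_mulVec_comp_of_equitable hC.cell _ (fun v j => ?_) w
  rw [← hC.nbrsInCell_eq hG, nbrsInCell]
  simp only [Fin.ext_iff]
  rfl

theorem adjMatrix_mulVec_eq_smul (hC : IsCRC G C ρ γ α β) (hG : G.Connected)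
    {w : Fin (ρ + 1) → ℝ} {t : ℝ} (hw : quotientMatrix ℝ γ α β ρ *ᵥ w = t • w) :
    G.adjMatrix ℂ *ᵥ (fun v => (w (hC.cell v) : ℂ)) =
      (t : ℂ) • fun v => (w (hC.cell v) : ℂ) := by
  have := hC.adjMatrix_mulVec_comp_cell hG (Complex.ofRealHom ∘ w)
  rw [quotientMatrix_mulVec_comp, hw] at this
  ext v
  simpa using congrFun this v

end IsCRC

theorem stmt13_general {V : Type*} [Fintype V] [DecidableEq V]
    (G : SimpleGraph V) [DecidableRel G.Adj] (k D : ℕ) (b c : ℕ → ℕ)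
    (hG : IsDRG G k D b c)
    (θ : Fin (D + 1) → ℝ)
    (E : Fin (D + 1) → Matrix V V ℂ) (hPI : PrimIdem (G.adjMatrix ℂ) D θ E)
    (q : Fin (D + 1) → Fin (D + 1) → Fin (D + 1) → ℝ) (hq : KreinRel D E q)
    (C : Finset V) (ρ : ℕ) (γ α β : ℕ → ℕ)
    (hC : IsCRC G C ρ γ α β)
    (idx : Fin (ρ + 1) → Fin (D + 1))
    (hidxinj : Function.Injective idx)
    (u : Fin (ρ + 1) → Fin (ρ + 1) → ℝ)
    (hu : ∀ j, quotientMatrix ℝ γ α β ρ *ᵥ u j = θ (idx j) • u j)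
    (hu0 : ∀ j, u j 0 = 1)
    (lam tau : Fin (ρ + 1) → ℝ)
    (hlam : u 1 * u 1 = ∑ j, lam j • u j)
    (htau : u 1 * u 1 * u 1 = ∑ j, tau j • u j) :
    ∀ j : Fin (ρ + 1),
      (lam j ≠ 0 → q (idx 1) (idx 1) (idx j) ≠ 0) ∧
        (tau j ≠ 0 → ∃ l : Fin (ρ + 1),
          q (idx 1) (idx 1) (idx l) ≠ 0 ∧ q (idx l) (idx 1) (idx j) ≠ 0) := by
  have hA := G.isHermitian_adjMatrix ℂ
  obtain ⟨v₀, hv₀⟩ := hC.1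
  set w : Fin (ρ + 1) → V → ℂ := fun m v => (u m (hC.cell v) : ℂ) with hw_def
  have hw m : G.adjMatrix ℂ *ᵥ w m = (θ (idx m) : ℂ) • w m :=
    hC.adjMatrix_mulVec_eq_smul hG.1 (hu m)
  have hw0 m : w m ≠ 0 := fun hm => by
    simpa [hw_def, hC.cell_eq_zero_of_mem hv₀, hu0] using congrFun hm v₀
  have hlamC : w 1 * w 1 = ∑ m, (lam m : ℂ) • w m := by
    ext v
    simpa [hw_def, Finset.sum_apply] using congrArg (fun f => (f (hC.cell v) : ℂ)) hlam
  have htauC : w 1 * w 1 * w 1 = ∑ m, (tau m : ℂ) • w m := by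
    ext v
    simpa [hw_def, Finset.sum_apply] using congrArg (fun f => (f (hC.cell v) : ℂ)) htau
  exact fun j =>
    ⟨fun hj => hPI.krein_ne_zero_of_mul_eq_sum hA hq hidxinj hw hw0 hlamC
        (by exact_mod_cast hj),
      fun hj => hPI.exists_krein_ne_zero_of_mul_mul_eq_sum hA hq hidxinj hw hw0 hlamC htauC
        (by exact_mod_cast hj)⟩

theorem stmt13 {V : Type*} [Fintype V] [DecidableEq V]
    (G : SimpleGraph V) [DecidableRel G.Adj] (k D : ℕ) (b c : ℕ → ℕ)
    (hG : IsDRG G k D b c)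
    (θ : Fin (D + 1) → ℝ) (hθ0 : θ 0 = k)
    (E : Fin (D + 1) → Matrix V V ℂ) (hPI : PrimIdem (G.adjMatrix ℂ) D θ E)
    (q : Fin (D + 1) → Fin (D + 1) → Fin (D + 1) → ℝ) (hq : KreinRel D E q)
    (C : Finset V) (ρ : ℕ) (γ α β : ℕ → ℕ)
    (hC : IsCRC G C ρ γ α β)
    (idx : Fin (ρ + 1) → Fin (D + 1)) (hidx0 : idx 0 = 0)
    (hidxinj : Function.Injective idx)
    (hspec : spectrum ℂ (quotientMatrix ℂ γ α β ρ) =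
      Set.range fun j => (θ (idx j) : ℂ))
    (u : Fin (ρ + 1) → Fin (ρ + 1) → ℝ)
    (hu : ∀ j, quotientMatrix ℝ γ α β ρ *ᵥ u j = θ (idx j) • u j)
    (hu0 : ∀ j, u j 0 = 1)
    (lam tau : Fin (ρ + 1) → ℝ)
    (hlam : u 1 * u 1 = ∑ j, lam j • u j)
    (htau : u 1 * u 1 * u 1 = ∑ j, tau j • u j) :
    ∀ j : Fin (ρ + 1),
      (lam j ≠ 0 → q (idx 1) (idx 1) (idx j) ≠ 0) ∧
        (tau j ≠ 0 → ∃ l : Fin (ρ + 1),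
          q (idx 1) (idx 1) (idx l) ≠ 0 ∧ q (idx l) (idx 1) (idx j) ≠ 0) :=
  stmt13_general G k D b c hG θ E hPI q hq C ρ γ α β hC idx hidxinj u hu hu0 lam tau hlam htau
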